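/- arXiv:1611.03669 — 2 statements merged into one kernel-verified Lean document; each statement's English description precedes it below -/
import Mathlib

section
/- Let S be a commutative ring, f ∈ S, and let F, G be S-modules. Suppose φ : G → F is an injective S-linear map such that f·x lies in the image of φ for every x ∈ F (equivalently, f annihilates F/im φ). Then there exists an S-linear map ψ : F → G satisfying φ ∘ ψ = f·id_F and ψ ∘ φ = f·id_G. -/
theorem matrix_factorization_from_module {S : Type*} [CommRing S] (f : S)
    {F G : Type*} [AddCommGroup F] [Module S F] [AddCommGroup G] [Module S G]
    (φ : G →ₗ[S] F) (hinj : Function.Injective φ)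
    (hann : ∀ x : F, f • x ∈ LinearMap.range φ) :
    ∃ ψ : F →ₗ[S] G,
      φ ∘ₗ ψ = f • (LinearMap.id : F →ₗ[S] F) ∧
      ψ ∘ₗ φ = f • (LinearMap.id : G →ₗ[S] G) := by
  have hch : ∀ x : F, φ ((hann x).choose) = f • x := fun x => (hann x).choose_spec
  refine ⟨{ toFun := fun x => (hann x).choose
            map_add' := ?_
            map_smul' := ?_ }, ?_, ?_⟩
  · intro x y
    apply hinj
    rw [hch, map_add, hch, hch, smul_add]
  · intro c x
    apply hinj
    rw [hch, map_smul, hch, smul_comm]; rfl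
  · ext x
    simpa using hch x
  · ext g
    apply hinj
    simp [hch, (hch (φ g)).trans (map_smul φ f g).symm]
end

section
/- Let S be a commutative ring and f ∈ S. Let F and G be S-modules on which f is regular, i.e., f·x = 0 implies x = 0 for x in F or in G. Let φ : G → F and ψ : F → G be S-linear maps with ψ ∘ φ = f·id_G and φ ∘ ψ = f·id_F. Then for every y ∈ G, φ(y) ∈ f·F if and only if y ∈ im ψ; and for every x ∈ F, ψ(x) ∈ f·G if and only if x ∈ im φ. -/
theorem matrix_factorization_two_periodic_exactness {S : Type*} [CommRing S] (f : S)
    {F G : Type*} [AddCommGroup F] [Module S F] [AddCommGroup G] [Module S G]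
    (hF : ∀ x : F, f • x = 0 → x = 0) (hG : ∀ y : G, f • y = 0 → y = 0)
    (φ : G →ₗ[S] F) (ψ : F →ₗ[S] G)
    (h1 : ψ ∘ₗ φ = f • (LinearMap.id : G →ₗ[S] G))
    (h2 : φ ∘ₗ ψ = f • (LinearMap.id : F →ₗ[S] F)) :
    (∀ y : G, (∃ x : F, φ y = f • x) ↔ y ∈ LinearMap.range ψ) ∧
    (∀ x : F, (∃ y : G, ψ x = f • y) ↔ x ∈ LinearMap.range φ) := by
  have e1 : ∀ y : G, ψ (φ y) = f • y := fun y => congrFun (congrArg DFunLike.coe h1) y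
  have e2 : ∀ x : F, φ (ψ x) = f • x := fun x => congrFun (congrArg DFunLike.coe h2) x
  constructor
  · intro y
    constructor
    · rintro ⟨x, hx⟩
      refine ⟨x, ?_⟩
      have : f • (ψ x - y) = 0 := by
        rw [smul_sub, ← e1 y, hx, map_smul, sub_self]
      have := hG _ this
      have := sub_eq_zero.mp this
      exact this
    · rintro ⟨x, rfl⟩
      exact ⟨x, e2 x⟩
  · intro x
    constructor
    · rintro ⟨y, hy⟩
      refine ⟨y, ?_⟩
      have : f • (φ y - x) = 0 := by
        rw [smul_sub, ← e2 x, hy, map_smul, sub_self]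
      exact sub_eq_zero.mp (hF _ this)
    · rintro ⟨y, rfl⟩
      exact ⟨y, e1 y⟩
end
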